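/- Let G be a group and H a subgroup with G = H·Z_n(G). Then H/Z_n(H) is isomorphic to G/Z_n(G). -/

import Mathlib

/-!
`H ∩ Z_n(G) ≤ Z_n(H)` holds for every subgroup; the content is the converse. Take
`x ∈ Z_m(H) ∩ γ_{k+1}(G)` with `m + k = n` and `g = h z`, `h ∈ H`, `z ∈ Z_n(G)`. Then
`[x, g] = [x, h] · [x, z]^h`, where `[x, h] ∈ Z_{m-1}(H) ∩ γ_{k+2}(G)` and, by the three
subgroups lemma, `[x, z] ∈ [Z_n(G), γ_{k+1}(G)] ≤ Z_{m-1}(G)`. Induction on `m` gives `x ∈ Z_m(G)`, so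
`H → G/Z_n(G)` is onto with kernel exactly `Z_n(H)`.
-/

open scoped commutatorElement

namespace Subgroup

variable {G : Type*} [Group G]

theorem commutator_commutator_le_of_rotate {H₁ H₂ H₃ N : Subgroup G} [N.Normal]
    (h1 : ⁅⁅H₂, H₃⁆, H₁⁆ ≤ N) (h2 : ⁅⁅H₃, H₁⁆, H₂⁆ ≤ N) : ⁅⁅H₁, H₂⁆, H₃⁆ ≤ N := by
  rw [← QuotientGroup.ker_mk' N, ← map_eq_bot_iff, map_commutator, map_commutator] at h1 h2 ⊢
  exact commutator_commutator_eq_bot_of_rotate h1 h2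

theorem commutator_upperCentralSeries_lowerCentralSeries_le (k j : ℕ) :
    ⁅upperCentralSeries G (j + k + 1), (⊤ : Subgroup G).lowerCentralSeries k⁆ ≤
      upperCentralSeries G j := by
  induction k generalizing j with
  | zero => simpa using commutator_upperCentralSeries_top_le G j
  | succ k ih =>
    rw [lowerCentralSeries_succ, commutator_comm]
    apply commutator_commutator_le_of_rotate
    · rw [commutator_comm ⊤]
      exact (commutator_mono (commutator_upperCentralSeries_top_le G _) le_rfl).trans (ih j)
    · rw [show j + (k + 1) + 1 = j + 1 + k + 1 by omega]
      exact (commutator_mono (ih (j + 1)) le_rfl).trans (commutator_upperCentralSeries_top_le G j)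

theorem comap_subtype_upperCentralSeries_le (H : Subgroup G) :
    ∀ n, (upperCentralSeries G n).comap H.subtype ≤ upperCentralSeries H n
  | 0, _, hx => Subtype.ext hx
  | n + 1, _, hx => fun y => comap_subtype_upperCentralSeries_le H n (hx y)

variable {H : Subgroup G} {n : ℕ}

theorem coe_mem_upperCentralSeries_of_sup_eq_top (hHZ : H ⊔ upperCentralSeries G n = ⊤)
    {m k : ℕ} (hmk : m + k = n) {x : H} (hx : x ∈ upperCentralSeries H m)
    (hxγ : (x : G) ∈ (⊤ : Subgroup G).lowerCentralSeries k) :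
    (x : G) ∈ upperCentralSeries G m := by
  induction m generalizing k x with
  | zero => simpa using hx
  | succ m ih =>
    intro g
    obtain ⟨h, hh, z, hz, rfl⟩ := mem_sup_of_normal_right.mp (hHZ ▸ mem_top g)
    have hxh : (⁅x, ⟨h, hh⟩⁆ : H) ∈ upperCentralSeries H m := hx ⟨h, hh⟩
    have hxh' : ⁅(x : G), h⁆ ∈ upperCentralSeries G m :=
      ih (k := k + 1) (by omega) hxh (commutator_mem_commutator hxγ (mem_top h))
    have hxz : ⁅(x : G), z⁆ ∈ upperCentralSeries G m := by
      rw [← hmk, add_right_comm] at hz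
      rw [← commutatorElement_inv]
      exact inv_mem (commutator_upperCentralSeries_lowerCentralSeries_le k m
        (commutator_mem_commutator hz hxγ))
    rw [commutatorElement_mul_right_eq_mul_conj, mul_assoc, mul_assoc, ← mul_assoc h]
    exact mul_mem hxh' (Normal.conj_mem inferInstance _ hxz h)

theorem upperCentralSeries_eq_comap_subtype_of_sup_eq_top
    (hHZ : H ⊔ upperCentralSeries G n = ⊤) :
    upperCentralSeries H n = (upperCentralSeries G n).comap H.subtype :=
  le_antisymm (fun _ hx => coe_mem_upperCentralSeries_of_sup_eq_top hHZ (add_zero n) hx (mem_top _))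
    (comap_subtype_upperCentralSeries_le H n)

end Subgroup

theorem quotient_upperCentral_iso_of_product
    {G : Type*} [Group G] (H : Subgroup G) (n : ℕ)
    (hHZ : ∀ g : G, ∃ h ∈ H, ∃ z ∈ Subgroup.upperCentralSeries G n, g = h * z) :
    Nonempty ((H ⧸ Subgroup.upperCentralSeries H n) ≃* (G ⧸ Subgroup.upperCentralSeries G n)) := by
  set Z := Subgroup.upperCentralSeries G n
  let φ : H →* G ⧸ Z := (QuotientGroup.mk' Z).comp H.subtype
  have hsurj : Function.Surjective φ := by
    refine (QuotientGroup.mk'_surjective Z).forall.mpr fun g => ?_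
    obtain ⟨h, hh, z, hz, rfl⟩ := hHZ g
    exact ⟨⟨h, hh⟩, QuotientGroup.eq.mpr (by simpa using hz)⟩
  have hsup : H ⊔ Z = ⊤ := eq_top_iff.mpr fun g _ => by
    obtain ⟨h, hh, z, hz, rfl⟩ := hHZ g
    exact Subgroup.mul_mem_sup hh hz
  have hker : Subgroup.upperCentralSeries H n = φ.ker := by
    rw [← MonoidHom.comap_ker, QuotientGroup.ker_mk']
    exact Subgroup.upperCentralSeries_eq_comap_subtype_of_sup_eq_top hsup
  exact ⟨(QuotientGroup.quotientMulEquivOfEq hker).trans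
    (QuotientGroup.quotientKerEquivOfSurjective φ hsurj)⟩
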